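/- arXiv:1304.1424 — 2 statements merged into one kernel-verified Lean document; each statement's English description precedes it below -/
import Mathlib

section
/- Let G be a bipartite graph with parts A and B, and suppose B¹ ⊆ B is a set of degree-1 vertices of B no two of which share a neighbor. Let X ⊆ B \ B¹ and let X' = X ∪ {b ∈ B¹ : the neighbor of b lies in N(X)}. If |N_{G'}(X)| < |X| in the induced subgraph G' = G[(A \ N(B¹)) ∪ (B \ B¹)], then |N_G(X')| < |X'|, where N denotes neighborhoods in the respective graphs. -/
/-!
Each vertex of `B¹` that enters `X'` has its unique neighbour already in `N(X)`, so passing from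
`X` to `X'` does not enlarge the neighbourhood: `N_G(X') = N_G(X)`. This neighbourhood splits into
`N_G(X) \ N(B¹) = N_{G'}(X)` and `N_G(X) ∩ N(B¹)`. Sending each vertex of `B¹` to its unique
neighbour maps `X' \ X` onto the second piece, so `|N_G(X) ∩ N(B¹)| ≤ |X' \ X|`, and the
deficiency of `X` in `G'` survives in `G`.
-/

open Finset

namespace SimpleGraph

variable {V : Type*} (G : SimpleGraph V) [DecidableRel G.Adj]

def neighborsIn (A X : Finset V) : Finset V := {a ∈ A | ∃ b ∈ X, G.Adj a b}

variable {G} [DecidableEq V]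

theorem neighborsIn_sdiff (A C X : Finset V) :
    G.neighborsIn (A \ C) X = G.neighborsIn A X \ C := by
  ext a
  simp only [neighborsIn, mem_filter, mem_sdiff]
  tauto

theorem neighborsIn_union_eq_left {A X Y : Finset V}
    (h : ∀ b ∈ Y, ∀ a ∈ A, G.Adj a b → a ∈ G.neighborsIn A X) :
    G.neighborsIn A (X ∪ Y) = G.neighborsIn A X := by
  ext a
  simp only [neighborsIn, mem_filter, mem_union]
  constructor
  · rintro ⟨ha, b, hbX | hbY, hab⟩
    · exact ⟨ha, b, hbX, hab⟩
    · obtain ⟨-, b', hb'X, hab'⟩ := mem_filter.1 (h b hbY a ha hab)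
      exact ⟨ha, b', hb'X, hab'⟩
  · rintro ⟨ha, b, hbX, hab⟩
    exact ⟨ha, b, Or.inl hbX, hab⟩

theorem card_inter_neighborsIn_le {A S T : Finset V}
    (hT : ∀ b ∈ T, ∀ a a', G.Adj a b → G.Adj a' b → a = a') :
    #(S ∩ G.neighborsIn A T) ≤ #{b ∈ T | ∃ a ∈ S, G.Adj a b} := by
  refine card_le_card_of_forall_subsingleton G.Adj ?_ ?_
  · intro a ha
    obtain ⟨haS, -, b, hbT, hab⟩ := mem_inter.1 ha |>.imp_right mem_filter.1
    exact ⟨b, mem_filter.2 ⟨hbT, a, haS, hab⟩, hab⟩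
  · intro b hb a ha a' ha'
    exact hT b (mem_filter.1 hb).1 a a' ha.2 ha'.2

end SimpleGraph

open SimpleGraph in
theorem stmt_17_general {V : Type*} [Fintype V] [DecidableEq V]
    (G : SimpleGraph V) [DecidableRel G.Adj] (A B B1 : Finset V)
    (hdeg1 : ∀ b ∈ B1, ∃! a : V, G.Adj a b)
    (X : Finset V) (hX : X ⊆ B \ B1)
    (hdef : ((A \ A.filter (fun a => ∃ b ∈ B1, G.Adj a b)).filter
        (fun a => ∃ b ∈ X, G.Adj a b)).card < X.card) :
    (A.filter (fun a => ∃ b ∈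
        X ∪ B1.filter (fun b => ∃ a' : V, G.Adj a' b ∧
          a' ∈ A.filter (fun a'' => ∃ b'' ∈ X, G.Adj a'' b'')),
      G.Adj a b)).card <
    (X ∪ B1.filter (fun b => ∃ a' : V, G.Adj a' b ∧
        a' ∈ A.filter (fun a'' => ∃ b'' ∈ X, G.Adj a'' b''))).card := by
  change #(G.neighborsIn (A \ G.neighborsIn A B1) X) < #X at hdef
  rw [neighborsIn_sdiff] at hdef
  change #(G.neighborsIn A (X ∪ {b ∈ B1 | ∃ a, G.Adj a b ∧ a ∈ G.neighborsIn A X})) <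
    #(X ∪ {b ∈ B1 | ∃ a, G.Adj a b ∧ a ∈ G.neighborsIn A X})
  set NX := G.neighborsIn A X
  set Y : Finset V := {b ∈ B1 | ∃ a ∈ NX, G.Adj a b}
  have hY : B1.filter (fun b => ∃ a, G.Adj a b ∧ a ∈ NX) = Y :=
    filter_congr fun _ _ => by simp only [and_comm]
  rw [hY]
  have hunique : ∀ b ∈ B1, ∀ a a', G.Adj a b → G.Adj a' b → a = a' :=
    fun b hb _ _ => (hdeg1 b hb).unique
  have hN : G.neighborsIn A (X ∪ Y) = NX := by
    refine neighborsIn_union_eq_left fun b hb a _ hab => ?_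
    obtain ⟨hbB1, a', ha', ha'b⟩ := mem_filter.1 hb
    rwa [hunique b hbB1 a a' hab ha'b]
  have hdisj : Disjoint X Y :=
    disjoint_of_subset_left hX (sdiff_disjoint.mono_right (filter_subset _ _))
  have hshared : #(NX ∩ G.neighborsIn A B1) ≤ #Y := card_inter_neighborsIn_le hunique
  rw [hN, card_union_of_disjoint hdisj, ← card_sdiff_add_card_inter NX (G.neighborsIn A B1)]
  omega

/-- Lifting a deficient set: in a bipartite graph with parts `A`, `B`, let `B¹ ⊆ B` consist
of degree-1 vertices no two of which share a neighbor. If `X ⊆ B \ B¹` is deficient in the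
graph induced on `(A \ N(B¹)) ∪ (B \ B¹)`, then
`X' = X ∪ {b ∈ B¹ : the neighbor of b lies in N(X)}` is deficient in `G`. -/
theorem stmt_17 {V : Type*} [Fintype V] [DecidableEq V]
    (G : SimpleGraph V) [DecidableRel G.Adj] (A B B1 : Finset V)
    (hbip : ∀ u v : V, G.Adj u v → (u ∈ A ∧ v ∈ B) ∨ (u ∈ B ∧ v ∈ A))
    (hB1 : B1 ⊆ B)
    (hdeg1 : ∀ b ∈ B1, ∃! a : V, G.Adj a b)
    (hnoshare : ∀ b ∈ B1, ∀ b' ∈ B1, b ≠ b' → ∀ a : V, G.Adj a b → ¬ G.Adj a b')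
    (X : Finset V) (hX : X ⊆ B \ B1)
    (hdef : ((A \ A.filter (fun a => ∃ b ∈ B1, G.Adj a b)).filter
        (fun a => ∃ b ∈ X, G.Adj a b)).card < X.card) :
    (A.filter (fun a => ∃ b ∈
        X ∪ B1.filter (fun b => ∃ a' : V, G.Adj a' b ∧
          a' ∈ A.filter (fun a'' => ∃ b'' ∈ X, G.Adj a'' b'')),
      G.Adj a b)).card <
    (X ∪ B1.filter (fun b => ∃ a' : V, G.Adj a' b ∧
        a' ∈ A.filter (fun a'' => ∃ b'' ∈ X, G.Adj a'' b''))).card :=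
  stmt_17_general G A B B1 hdeg1 X hX hdef
end

section
/- Every finite simple undirected graph on n ≥ 2 vertices with minimum degree at least 3 contains a cycle of length at most 2·log₂(n) + 2 (more generally, a graph with minimum degree at least 3 has girth at most 2·log₂ n + 2). -/
/-! If every cycle of `G` is longer than `2k`, two paths of length at most `k` ending at a fixed
vertex `v` and starting at the same vertex would close a cycle of length at most `2k`, so such
paths are determined by their starting vertex. On the other hand, by the same girth bound at most
one neighbour of the start of such a path lies on it, so with minimum degree `3` every path of
length `j < k` ending at `v` extends at its start in at least two ways. Hence `2 ^ k ≤ n`, which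
fails for `k = ⌊log₂ n⌋ + 1`. -/

open Finset

namespace SimpleGraph

variable {V : Type*} {G : SimpleGraph V}

theorem Walk.IsPath.eq_of_length_add_length_lt_egirth [DecidableEq V] {u v : V}
    {p q : G.Walk u v} (hp : p.IsPath) (hq : q.IsPath)
    (hlt : (p.length + q.length : ℕ∞) < G.egirth) : p = q := by
  by_contra hne
  -- the graph spanned by the edges of `p` and `q` has a cycle, which is a cycle of `G`
  -- using only edges of `p` and `q`
  set L := p.edges ++ q.edges
  let H := fromEdgeSet {e | e ∈ L}
  have hL : ∀ e ∈ L, e ∈ G.edgeSet := by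
    simpa [L, or_imp, forall_and] using ⟨p.edges_subset_edgeSet, q.edges_subset_edgeSet⟩
  have hmemH : ∀ e ∈ L, e ∈ H.edgeSet := fun e he => by
    rw [edgeSet_fromEdgeSet]
    exact ⟨he, G.not_isDiag_of_mem_edgeSet (hL e he)⟩
  have hHG : H ≤ G := (fromEdgeSet_le G).mpr fun e he => hL e he.1
  have hpH : ∀ e ∈ p.edges, e ∈ H.edgeSet := fun e he => hmemH e (List.mem_append_left _ he)
  have hqH : ∀ e ∈ q.edges, e ∈ H.edgeSet := fun e he => hmemH e (List.mem_append_right _ he)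
  have hH : ¬ H.IsAcyclic := fun hH => hne <| Walk.ext_support <| by
    have := (isAcyclic_iff_subsingleton_path.mp hH u v).elim
      ⟨_, hp.transfer hpH⟩ ⟨_, hq.transfer hqH⟩
    simpa [Walk.support_transfer] using congrArg (fun r : H.Path u v => r.1.support) this
  obtain ⟨x, c, hc, -⟩ := exists_egirth_eq_length.mpr hH
  have hc_le : c.length ≤ p.length + q.length := calc
    c.length = #c.edges.toFinset := by
      rw [List.toFinset_card_of_nodup hc.edges_nodup, Walk.length_edges]
    _ ≤ #L.toFinset := card_le_card fun e he => by
      have := c.edges_subset_edgeSet (List.mem_toFinset.mp he)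
      rw [edgeSet_fromEdgeSet] at this
      exact List.mem_toFinset.mpr this.1
    _ ≤ L.length := List.toFinset_card_le _
    _ = p.length + q.length := by simp [L]
  have := (egirth_anti hHG).trans (egirth_le_length hc)
  exact this.not_gt (hlt.trans_le' (by exact_mod_cast hc_le))

theorem Walk.IsPath.eq_snd_of_adj_of_length_add_one_lt_egirth [DecidableEq V] {u v w : V}
    {p : G.Walk u v} (hp : p.IsPath) (hlt : (p.length + 1 : ℕ∞) < G.egirth)
    (hadj : G.Adj u w) (hw : w ∈ p.support) : w = p.snd := by
  have hle : ((p.takeUntil w hw).length + (Path.singleton hadj : G.Walk u w).length : ℕ∞)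
      < G.egirth :=
    hlt.trans_le' (by simpa using p.length_takeUntil_le_length hw)
  have := (hp.takeUntil hw).eq_of_length_add_length_lt_egirth (Path.singleton hadj).2 hle
  grind [p.getVert_length_takeUntil hw, Path.singleton_coe, Walk.length]

variable [Fintype V] [DecidableEq V] [DecidableRel G.Adj]

variable (G) in
def finsetPathLengthTo (k : ℕ) (v : V) : Finset (Σ u, G.Walk u v) :=
  univ.sigma fun u => {p ∈ G.finsetWalkLength k u v | p.IsPath}

@[simp]
theorem mem_finsetPathLengthTo {k : ℕ} {v : V} {p : Σ u, G.Walk u v} :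
    p ∈ G.finsetPathLengthTo k v ↔ p.2.IsPath ∧ p.2.length = k := by
  simp [finsetPathLengthTo, mem_finsetWalkLength_iff, and_comm]

theorem card_finsetPathLengthTo_le_card {k : ℕ} (v : V) (hk : (2 * k : ℕ∞) < G.egirth) :
    #(G.finsetPathLengthTo k v) ≤ Fintype.card V := by
  refine card_le_card_of_injOn Sigma.fst (fun _ _ => mem_univ _) ?_
  rintro ⟨u, p⟩ hp ⟨_, q⟩ hq (rfl : u = _)
  rw [mem_coe, mem_finsetPathLengthTo] at hp hq
  congr
  exact hp.1.eq_of_length_add_length_lt_egirth hq.1 (by rwa [hp.2, hq.2, ← two_mul])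

theorem two_le_card_neighborFinset_sdiff_support (hdeg : ∀ v, 3 ≤ G.degree v) {u v : V}
    {p : G.Walk u v} (hp : p.IsPath) (hlt : (p.length + 1 : ℕ∞) < G.egirth) :
    2 ≤ #(G.neighborFinset u \ p.support.toFinset) := by
  have hinter : #(G.neighborFinset u ∩ p.support.toFinset) ≤ 1 := by
    refine card_le_one.mpr fun w hw w' hw' => ?_
    simp only [mem_inter, mem_neighborFinset, List.mem_toFinset] at hw hw'
    rw [hp.eq_snd_of_adj_of_length_add_one_lt_egirth hlt hw.1 hw.2,
      hp.eq_snd_of_adj_of_length_add_one_lt_egirth hlt hw'.1 hw'.2]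
  have hsplit := card_sdiff_add_card_inter (G.neighborFinset u) p.support.toFinset
  have hu := hdeg u
  rw [← card_neighborFinset_eq_degree] at hu
  omega

theorem two_mul_card_finsetPathLengthTo_le (hdeg : ∀ v, 3 ≤ G.degree v) {k : ℕ} (v : V)
    (hk : (k + 1 : ℕ∞) < G.egirth) :
    2 * #(G.finsetPathLengthTo k v) ≤ #(G.finsetPathLengthTo (k + 1) v) := by
  refine mul_card_image_le_card_of_maps_to (f := fun p => ⟨p.2.snd, p.2.tail⟩) ?_ 2 ?_
  · rintro ⟨u, p⟩ hp
    rw [mem_finsetPathLengthTo] at hp ⊢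
    exact ⟨hp.1.tail, by simp [Walk.length_tail, hp.2]⟩
  · rintro ⟨u, p⟩ hp
    rw [mem_finsetPathLengthTo] at hp
    refine (two_le_card_neighborFinset_sdiff_support hdeg hp.1 (by rwa [hp.2])).trans
      (card_le_card_of_surjOn Sigma.fst fun w hw => ?_)
    simp only [mem_coe, mem_sdiff, mem_neighborFinset, List.mem_toFinset] at hw
    refine ⟨⟨w, .cons hw.1.symm p⟩, ?_, rfl⟩
    simp only [mem_coe, mem_filter, mem_finsetPathLengthTo, Walk.cons_isPath_iff]
    refine ⟨⟨⟨hp.1, hw.2⟩, by simp [hp.2]⟩, ?_⟩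
    cases p <;> rfl

theorem two_pow_le_card_finsetPathLengthTo (hdeg : ∀ v, 3 ≤ G.degree v) {k : ℕ} (v : V)
    (hk : (k : ℕ∞) < G.egirth) : 2 ^ k ≤ #(G.finsetPathLengthTo k v) := by
  induction k with
  | zero => exact card_pos.mpr ⟨⟨v, .nil⟩, by simp⟩
  | succ k ih =>
    push_cast at hk
    calc 2 ^ (k + 1) = 2 * 2 ^ k := pow_succ' 2 k
      _ ≤ 2 * #(G.finsetPathLengthTo k v) := by
        gcongr
        exact ih (hk.trans_le' (by simp))
      _ ≤ #(G.finsetPathLengthTo (k + 1) v) := two_mul_card_finsetPathLengthTo_le hdeg v hk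

theorem egirth_le_two_mul_of_card_lt_two_pow [Nonempty V] (hdeg : ∀ v, 3 ≤ G.degree v) {k : ℕ}
    (hk : Fintype.card V < 2 ^ k) : G.egirth ≤ 2 * k := by
  by_contra! hlt
  obtain ⟨v⟩ := ‹Nonempty V›
  have hlower := two_pow_le_card_finsetPathLengthTo (k := k) hdeg v
    (hlt.trans_le' (by norm_cast; omega))
  have hupper := card_finsetPathLengthTo_le_card v hlt
  omega

end SimpleGraph

/-- Every finite simple graph on `n ≥ 2` vertices with minimum degree at least 3 contains
a cycle of length at most `2 log₂ n + 2`. -/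
theorem stmt_19 {V : Type*} [Fintype V] [DecidableEq V]
    (G : SimpleGraph V) [DecidableRel G.Adj]
    (hn : 2 ≤ Fintype.card V)
    (hdeg : ∀ v : V, 3 ≤ G.degree v) :
    ∃ (v : V) (w : G.Walk v v), w.IsCycle ∧
      (w.length : ℝ) ≤ 2 * Real.logb 2 (Fintype.card V) + 2 := by
  have : Nonempty V := Fintype.card_pos_iff.mp (by omega)
  set r := Nat.log 2 (Fintype.card V)
  have hgirth : G.egirth ≤ (2 * (r + 1) : ℕ) := by
    exact_mod_cast G.egirth_le_two_mul_of_card_lt_two_pow hdeg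
      (Nat.lt_pow_succ_log_self one_lt_two _)
  have hcyclic : ¬ G.IsAcyclic := by
    rw [← SimpleGraph.egirth_eq_top]
    exact ne_top_of_le_ne_top (ENat.natCast_ne_top _) hgirth
  obtain ⟨v, w, hw, hlen⟩ := SimpleGraph.exists_egirth_eq_length.mpr hcyclic
  refine ⟨v, w, hw, ?_⟩
  have hw_le : (w.length : ℝ) ≤ 2 * r + 2 := by exact_mod_cast hlen ▸ hgirth
  have hr : (r : ℝ) ≤ Real.logb 2 (Fintype.card V) := by
    exact_mod_cast Real.natLog_le_logb _ 2
  linarith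
end
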